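/- arXiv:math/0403111 — 2 statements merged into one kernel-verified Lean document; each statement's English description precedes it below -/
import Mathlib

section
/- Let A and B be ℤ₂-graded commutative ℝ-algebras with differentials d_A and d_B, and let p : A → B be a parity-preserving ℝ-algebra homomorphism with p ∘ d_A = d_B ∘ p and p(a) = 0. Let a ∈ A₀ be regular, b ∈ A₁ with d_A(a) = b·a, and let i be an even derivation of A with i(a) = 1. Then the element p(d_A(i(a)) + i(d_A(a))) of B equals p(b) and is annihilated by d_B. -/
/-- A `ℤ₂`-graded commutative `ℝ`-algebra: an associative unital `ℝ`-algebra `A`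
together with a direct sum decomposition `A = A₀ ⊕ A₁` into `ℝ`-subspaces such that
`Aᵢ · Aⱼ ⊆ A_{i+j}` and homogeneous elements super-commute. -/
structure Z2CommAlgebra (A : Type) [Ring A] [Algebra ℝ A] : Type where
  even : Submodule ℝ A
  odd : Submodule ℝ A
  isCompl : IsCompl even odd
  one_mem : (1 : A) ∈ even
  mul_even_even : ∀ x ∈ even, ∀ y ∈ even, x * y ∈ even
  mul_even_odd : ∀ x ∈ even, ∀ y ∈ odd, x * y ∈ odd
  mul_odd_even : ∀ x ∈ odd, ∀ y ∈ even, x * y ∈ odd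
  mul_odd_odd : ∀ x ∈ odd, ∀ y ∈ odd, x * y ∈ even
  comm_even_even : ∀ x ∈ even, ∀ y ∈ even, x * y = y * x
  comm_even_odd : ∀ x ∈ even, ∀ y ∈ odd, x * y = y * x
  anticomm_odd_odd : ∀ x ∈ odd, ∀ y ∈ odd, x * y = -(y * x)

/-- An odd derivation of a `ℤ₂`-graded commutative `ℝ`-algebra: an `ℝ`-linear map
shifting parity and satisfying the signed Leibniz rule on homogeneous elements. -/
structure OddDerivation {A : Type} [Ring A] [Algebra ℝ A] (G : Z2CommAlgebra A) : Type where
  toLinearMap : A →ₗ[ℝ] A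
  map_even : ∀ x ∈ G.even, toLinearMap x ∈ G.odd
  map_odd : ∀ x ∈ G.odd, toLinearMap x ∈ G.even
  leibniz_even : ∀ x ∈ G.even, ∀ y : A,
    toLinearMap (x * y) = toLinearMap x * y + x * toLinearMap y
  leibniz_odd : ∀ x ∈ G.odd, ∀ y : A,
    toLinearMap (x * y) = toLinearMap x * y - x * toLinearMap y

/-- A differential: an odd derivation squaring to zero. -/
structure Z2Differential {A : Type} [Ring A] [Algebra ℝ A] (G : Z2CommAlgebra A)
    extends OddDerivation G : Type where
  d_d : ∀ x : A, toLinearMap (toLinearMap x) = 0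

/-- An even derivation of a `ℤ₂`-graded commutative `ℝ`-algebra: an `ℝ`-linear map
preserving parity and satisfying the Leibniz rule. -/
structure EvenDerivation {A : Type} [Ring A] [Algebra ℝ A] (G : Z2CommAlgebra A) : Type where
  toLinearMap : A →ₗ[ℝ] A
  map_even : ∀ x ∈ G.even, toLinearMap x ∈ G.even
  map_odd : ∀ x ∈ G.odd, toLinearMap x ∈ G.odd
  leibniz : ∀ x y : A, toLinearMap (x * y) = toLinearMap x * y + x * toLinearMap y

/-- if `p` intertwines the differentials `d_A`, `d_B` and kills the
regular even element `a` with `d_A a = b·a`, and `i` is an even derivation with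
`i a = 1`, then `p (d_A (i a) + i (d_A a)) = p b` and this element is closed in `B`. -/
theorem projected_lie_derivative_closed {A B : Type} [Ring A] [Algebra ℝ A]
    [Ring B] [Algebra ℝ B]
    (GA : Z2CommAlgebra A) (GB : Z2CommAlgebra B)
    (dA : Z2Differential GA) (dB : Z2Differential GB)
    (p : A →ₐ[ℝ] B)
    (hp_even : ∀ x ∈ GA.even, p x ∈ GB.even) (hp_odd : ∀ x ∈ GA.odd, p x ∈ GB.odd)
    (hpd : ∀ x : A, p (dA.toLinearMap x) = dB.toLinearMap (p x))
    {a b : A} (ha : a ∈ GA.even) (hreg : ∀ c : A, a * c = 0 → c = 0)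
    (hb : b ∈ GA.odd) (hpa : p a = 0)
    (hda : dA.toLinearMap a = b * a)
    (i : EvenDerivation GA) (hia : i.toLinearMap a = 1) :
    p (dA.toLinearMap (i.toLinearMap a) + i.toLinearMap (dA.toLinearMap a)) = p b ∧
    dB.toLinearMap
      (p (dA.toLinearMap (i.toLinearMap a) + i.toLinearMap (dA.toLinearMap a))) = 0 := by
  have h1 : dA.toLinearMap (1 : A) = 0 := by
    have h := dA.leibniz_even 1 GA.one_mem 1
    simp only [one_mul, mul_one] at h
    have h2 : dA.toLinearMap (1 : A) + dA.toLinearMap (1 : A)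
        - dA.toLinearMap (1 : A) = 0 := by rw [← h]; exact sub_self _
    simpa using h2
  have hib : i.toLinearMap (dA.toLinearMap a) = i.toLinearMap b * a + b := by
    rw [hda, i.leibniz, hia, mul_one]
  have hbb : b * b = 0 := by
    have h := GA.anticomm_odd_odd b hb b hb
    have h2 : (2 : ℝ) • (b * b) = 0 := by
      rw [two_smul]; nth_rewrite 1 [h]; exact neg_add_cancel _
    rcases smul_eq_zero.mp h2 with h | h
    · norm_num at h
    · exact h
  have hdb : dA.toLinearMap b = 0 := by
    have hdd := dA.d_d a
    rw [hda, dA.leibniz_odd b hb a, hda] at hdd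
    have h3 : dA.toLinearMap b * a = 0 := by
      have h4 : dA.toLinearMap b * a = b * (b * a) := sub_eq_zero.mp hdd
      rw [h4, ← mul_assoc, hbb, zero_mul]
    have hcomm : a * dA.toLinearMap b = dA.toLinearMap b * a :=
      GA.comm_even_even a ha (dA.toLinearMap b) (dA.map_odd b hb)
    exact hreg _ (hcomm.trans h3)
  have key : p (dA.toLinearMap (i.toLinearMap a) + i.toLinearMap (dA.toLinearMap a))
      = p b := by
    rw [hia, h1, hib]
    simp [hpa]
  refine ⟨key, ?_⟩
  rw [key, ← hpd b, hdb, map_zero]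
end

section
/- Let A and B be ℤ₂-graded commutative ℝ-algebras with differentials d_A and d_B, and let p : A → B be a parity-preserving ℝ-algebra homomorphism with p ∘ d_A = d_B ∘ p. Let a ∈ A₀ be regular, let f ∈ A₀ be invertible with inverse f⁻¹ ∈ A₀, and let b, b′ ∈ A₁ satisfy d_A(a) = b·a and d_A(f·a) = b′·(f·a). Then p(f) is invertible in B and p(b′) = p(b) + p(f)⁻¹·d_B(p(f)); that is, p(b′) and p(b) differ by the logarithmic derivative of the invertible even element p(f). -/
/-- if `p` intertwines the differentials, `a ∈ A₀` is regular,
`f ∈ A₀` is invertible with inverse `f⁻¹ ∈ A₀`, and `b, b' ∈ A₁` satisfy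
`d_A a = b·a` and `d_A (f·a) = b'·(f·a)`, then `p f` is invertible in `B` and
`p b' = p b + (p f)⁻¹ · d_B (p f)`: the projections `p b'` and `p b` differ by
the logarithmic derivative of the invertible even element `p f`. -/
theorem projected_gauge_change {A B : Type} [Ring A] [Algebra ℝ A] [Ring B] [Algebra ℝ B]
    (GA : Z2CommAlgebra A) (GB : Z2CommAlgebra B)
    (dA : Z2Differential GA) (dB : Z2Differential GB)
    (p : A →ₐ[ℝ] B)
    (hp_even : ∀ x ∈ GA.even, p x ∈ GB.even) (hp_odd : ∀ x ∈ GA.odd, p x ∈ GB.odd)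
    (hpd : ∀ x : A, p (dA.toLinearMap x) = dB.toLinearMap (p x))
    {a b b' f fi : A} (ha : a ∈ GA.even) (hreg : ∀ c : A, a * c = 0 → c = 0)
    (hf : f ∈ GA.even) (hfi : fi ∈ GA.even) (hffi : f * fi = 1) (hfif : fi * f = 1)
    (hb : b ∈ GA.odd) (hb' : b' ∈ GA.odd)
    (hda : dA.toLinearMap a = b * a)
    (hdfa : dA.toLinearMap (f * a) = b' * (f * a)) :
    IsUnit (p f) ∧ p b' = p b + Ring.inverse (p f) * dB.toLinearMap (p f) := by
  have h1 : p f * p fi = 1 := by rw [← map_mul, hffi, map_one]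
  have h2 : p fi * p f = 1 := by rw [← map_mul, hfif, map_one]
  have hu : IsUnit (p f) := ⟨⟨p f, p fi, h1, h2⟩, rfl⟩
  have hinv : Ring.inverse (p f) = p fi := by
    simpa using Ring.inverse_unit (⟨p f, p fi, h1, h2⟩ : Bˣ)
  refine ⟨hu, ?_⟩
  have hdf_odd : dA.toLinearMap f ∈ GA.odd := dA.map_even f hf
  have hc_odd : b' * f - dA.toLinearMap f - f * b ∈ GA.odd :=
    Submodule.sub_mem _ (Submodule.sub_mem _ (GA.mul_odd_even b' hb' f hf) hdf_odd)
      (GA.mul_even_odd f hf b hb)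
  have key : dA.toLinearMap f * a + f * (b * a) = b' * (f * a) := by
    rw [← hda, ← dA.leibniz_even f hf a, hdfa]
  have hca : (b' * f - dA.toLinearMap f - f * b) * a = 0 := by
    rw [sub_mul, sub_mul, mul_assoc, mul_assoc, ← key]
    abel
  have hac : a * (b' * f - dA.toLinearMap f - f * b) = 0 := by
    rw [GA.comm_even_odd a ha _ hc_odd, hca]
  have hc0 := hreg _ hac
  rw [sub_sub] at hc0
  have heq : b' * f = dA.toLinearMap f + f * b := sub_eq_zero.mp hc0
  have hp : p b' * p f = dB.toLinearMap (p f) + p f * p b := by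
    have := congrArg p heq
    rw [map_mul, map_add, map_mul, hpd] at this
    exact this
  have hpb_odd : p b ∈ GB.odd := hp_odd b hb
  have hpfi_even : p fi ∈ GB.even := hp_even fi hfi
  have hdpf_odd : dB.toLinearMap (p f) ∈ GB.odd := dB.map_even (p f) (hp_even f hf)
  calc p b' = p b' * (p f * p fi) := by rw [h1, mul_one]
    _ = (p b' * p f) * p fi := by rw [mul_assoc]
    _ = (dB.toLinearMap (p f) + p f * p b) * p fi := by rw [hp]
    _ = dB.toLinearMap (p f) * p fi + p f * (p b * p fi) := by rw [add_mul, mul_assoc]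
    _ = p fi * dB.toLinearMap (p f) + p f * (p fi * p b) := by
        rw [GB.comm_even_odd (p fi) hpfi_even _ hdpf_odd,
          GB.comm_even_odd (p fi) hpfi_even _ hpb_odd]
    _ = p b + Ring.inverse (p f) * dB.toLinearMap (p f) := by
        rw [hinv, ← mul_assoc, h1, one_mul, add_comm]
end
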